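/- Let H_n denote the (physicists') Hermite polynomials, orthogonal with respect to e^{−x²} on ℝ and normalized with leading coefficient 2ⁿ. Then for every fixed x ∈ ℝ, lim_{n→∞} (−1)ⁿ √n · H_{2n}(x/(2√n)) / (2^{2n} n!) = cos(x)/√π. -/

import Mathlib

/-!
Expanding `H_{2n}`, the normalized value at `x / (2√n)` equals
`a_n · ∑_k (n)_k / n^k · (-1)^k x^{2k} / (2k)!`, where `(n)_k` is the falling factorial and
`a_n = √n · C(2n, n) / 4^n → 1/√π` by Stirling's formula. The factors `(n)_k / n^k` lie in
`[0, 1]` and tend to `1`, so by dominated convergence for series (Tannery) the sum tends to the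
cosine series.
-/

open Filter Finset Real Topology Asymptotics
open scoped Nat

theorem tendsto_descFactorial_div_pow (k : ℕ) :
    Tendsto (fun n : ℕ => (n.descFactorial k : ℝ) / n ^ k) atTop (𝓝 1) := by
  refine (isEquivalent_iff_tendsto_one ?_).mp (isEquivalent_descFactorial k)
  filter_upwards [eventually_ne_atTop 0] with n hn
  positivity

theorem tendsto_tsum_descFactorial_div_pow_smul {E : Type*} [NormedAddCommGroup E]
    [NormedSpace ℝ E] [CompleteSpace E] {c : ℕ → E} (hc : Summable (‖c ·‖)) :
    Tendsto (fun n : ℕ => ∑' k, ((n.descFactorial k : ℝ) / n ^ k) • c k) atTop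
      (𝓝 (∑' k, c k)) := by
  have hbound (n k : ℕ) : ‖((n.descFactorial k : ℝ) / n ^ k) • c k‖ ≤ ‖c k‖ := by
    rw [norm_smul, Real.norm_of_nonneg (by positivity)]
    refine mul_le_of_le_one_left (norm_nonneg _) (div_le_one_of_le₀ ?_ (by positivity))
    exact_mod_cast n.descFactorial_le_pow k
  simpa only [one_smul] using tendsto_tsum_of_dominated_convergence hc
    (fun k => (tendsto_descFactorial_div_pow k).smul_const (c k))
    (Eventually.of_forall hbound)

theorem Nat.centralBinom_mul_factorial_mul_factorial (n : ℕ) :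
    n.centralBinom * n ! * n ! = (2 * n)! := by
  have h := Nat.choose_mul_factorial_mul_factorial (n := 2 * n) (k := n) (by omega)
  rwa [show 2 * n - n = n by omega, ← Nat.centralBinom_eq_two_mul_choose] at h

theorem sqrt_mul_centralBinom_div_four_pow_eq_stirlingSeq {n : ℕ} (hn : n ≠ 0) :
    √n * n.centralBinom / 4 ^ n = Stirling.stirlingSeq (2 * n) / Stirling.stirlingSeq n ^ 2 := by
  have hfac : (n.centralBinom : ℝ) * n ! * n ! = (2 * n)! := by
    exact_mod_cast Nat.centralBinom_mul_factorial_mul_factorial n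
  have hsqrt : √(2 * ((2 * n : ℕ) : ℝ)) = 2 * √n := by
    rw [Nat.cast_mul, Nat.cast_two, ← mul_assoc, show (2 : ℝ) * 2 = 2 ^ 2 by norm_num,
      Real.sqrt_mul (by positivity), Real.sqrt_sq zero_le_two]
  have hpow : ((2 * n : ℕ) / exp 1 : ℝ) ^ (2 * n) = 4 ^ n * ((n / exp 1) ^ n) ^ 2 := by
    rw [Nat.cast_mul, Nat.cast_two, mul_div_assoc, mul_pow, pow_mul, pow_mul']
    norm_num
  unfold Stirling.stirlingSeq
  rw [hsqrt, hpow, ← hfac, Real.sqrt_mul zero_le_two]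
  field_simp
  rw [Real.sq_sqrt zero_le_two]

theorem tendsto_sqrt_mul_centralBinom_div_four_pow :
    Tendsto (fun n : ℕ => √n * n.centralBinom / 4 ^ n) atTop (𝓝 (√π)⁻¹) := by
  have hπ : √π ≠ 0 := by positivity
  have h := (Stirling.tendsto_stirlingSeq_sqrt_pi.comp (tendsto_id.const_mul_atTop' two_pos)).div
    (Stirling.tendsto_stirlingSeq_sqrt_pi.pow 2) (pow_ne_zero 2 hπ)
  rw [sq, div_mul_cancel_left₀ hπ] at h
  refine h.congr' ?_
  filter_upwards [eventually_ne_atTop 0] with n hn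
  exact (sqrt_mul_centralBinom_div_four_pow_eq_stirlingSeq hn).symm

noncomputable def evenHermite (n : ℕ) (y : ℝ) : ℝ :=
  (2 * n)! * ∑ k ∈ range (n + 1), (-1 : ℝ) ^ (n - k) * (2 * y) ^ (2 * k) / ((2 * k)! * (n - k)!)

theorem neg_one_pow_mul_sqrt_mul_evenHermite_div_eq (x : ℝ) (n : ℕ) :
    (-1 : ℝ) ^ n * √n * evenHermite n (x / (2 * √n)) / (2 ^ (2 * n) * n !) =
    √n * n.centralBinom / 4 ^ n *
      ∑' k, ((n.descFactorial k : ℝ) / n ^ k) • ((-1) ^ k * x ^ (2 * k) / (2 * k)!) := by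
  rcases eq_or_ne n 0 with rfl | hn
  · simp [evenHermite]
  have hn0 : (0 : ℝ) < n := by positivity
  have hfac : (2 * n)! = (n.centralBinom : ℝ) * n ! * n ! := by
    exact_mod_cast (Nat.centralBinom_mul_factorial_mul_factorial n).symm
  rw [tsum_eq_sum (s := range (n + 1)) fun k hk => by
    rw [Nat.descFactorial_eq_zero_iff_lt.mpr (by simpa using hk), Nat.cast_zero, zero_div,
      zero_smul]]
  rw [evenHermite, mul_sum, mul_sum, sum_div, mul_sum]
  refine sum_congr rfl fun k hk => ?_
  have hkn : k ≤ n := Nat.lt_succ_iff.mp (mem_range.mp hk)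
  have hsign : (-1 : ℝ) ^ n * (-1) ^ (n - k) = (-1) ^ k := by
    rw [← pow_add, show n + (n - k) = 2 * (n - k) + k by omega, pow_add, pow_mul]
    norm_num
  have hdesc : (n.descFactorial k : ℝ) = n ! / (n - k)! := by
    rw [eq_div_iff (by positivity), mul_comm]
    exact_mod_cast Nat.factorial_mul_descFactorial hkn
  have hscale : (2 * (x / (2 * √n))) ^ (2 * k) = x ^ (2 * k) / n ^ k := by
    rw [← mul_div_assoc, mul_div_mul_left x _ two_ne_zero, div_pow, pow_mul, pow_mul,
      Real.sq_sqrt hn0.le]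
  rw [hscale, hdesc, hfac, smul_eq_mul, show (4 : ℝ) ^ n = 2 ^ (2 * n) by rw [pow_mul]; norm_num]
  field_simp
  rw [← hsign]
  ring

theorem stmt_19 (x : ℝ) :
    let H : ℕ → ℝ → ℝ := fun n y =>
      (Nat.factorial (2 * n)) * ∑ k ∈ Finset.range (n + 1),
        (-1 : ℝ) ^ (n - k) * (2 * y) ^ (2 * k) /
          ((Nat.factorial (2 * k)) * (Nat.factorial (n - k)))
    Tendsto (fun n : ℕ =>
        (-1 : ℝ) ^ n * Real.sqrt n * H n (x / (2 * Real.sqrt n)) /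
          (2 ^ (2 * n) * (Nat.factorial n)))
      atTop (nhds (Real.cos x / Real.sqrt Real.pi)) := by
  intro H
  have hcos := Real.hasSum_cos x
  have hlim := tendsto_sqrt_mul_centralBinom_div_four_pow.mul
    (tendsto_tsum_descFactorial_div_pow_smul (summable_abs_iff.mpr hcos.summable))
  rw [hcos.tsum_eq, inv_mul_eq_div] at hlim
  exact hlim.congr fun n => (neg_one_pow_mul_sqrt_mul_evenHermite_div_eq x n).symm
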